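/- For the qubit dephasing channel Δ_p(X) = (1−p)X + pZXZ with 0 ≤ p < 1/2, the inverse map Δ_p^{-1} is trace preserving, and its diamond norm equals 1/(1−2p). -/

import Mathlib

open Matrix Kronecker ComplexOrder

/-- Singular values of a square complex matrix. -/
noncomputable def singVals {n : Type*} [Fintype n] [DecidableEq n]
    (X : Matrix n n ℂ) : n → ℝ :=
  fun i => Real.sqrt ((Matrix.isHermitian_mul_conjTranspose_self X).eigenvalues i)

/-- Trace norm (Schatten 1-norm): sum of singular values; for Hermitian `X` this
is the sum of the absolute values of the eigenvalues. -/
noncomputable def traceNorm {n : Type*} [Fintype n] [DecidableEq n]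
    (X : Matrix n n ℂ) : ℝ :=
  ∑ i, singVals X i

/-- Operator norm (Schatten ∞-norm): largest singular value. -/
noncomputable def opNorm {n : Type*} [Fintype n] [DecidableEq n]
    (X : Matrix n n ℂ) : ℝ :=
  ⨆ i, singVals X i

/-- A density operator: positive semidefinite with unit trace. -/
def Density {n : Type*} [Fintype n] (ρ : Matrix n n ℂ) : Prop :=
  ρ.PosSemidef ∧ ρ.trace = 1

/-- Loewner order: `X ⊑ Y` iff `Y - X` is positive semidefinite. -/
def Loewner {n : Type*} [Fintype n] (X Y : Matrix n n ℂ) : Prop :=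
  (Y - X).PosSemidef

/-- Partial trace over the second (B) factor. -/
noncomputable def ptraceB {a b : Type*} [Fintype b] (M : Matrix (a × b) (a × b) ℂ) :
    Matrix a a ℂ :=
  Matrix.of fun i j => ∑ k, M (i, k) (j, k)

/-- Choi matrix of a linear map on matrices. -/
noncomputable def choi {da db : ℕ}
    (Φ : Matrix (Fin da) (Fin da) ℂ →ₗ[ℂ] Matrix (Fin db) (Fin db) ℂ) :
    Matrix (Fin da × Fin db) (Fin da × Fin db) ℂ :=
  Matrix.of fun p q => Φ (Matrix.single p.1 q.1 1) p.2 q.2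

/-- Completely positive and trace non-increasing, via the Choi matrix. -/
def IsCPTNI {da db : ℕ}
    (Φ : Matrix (Fin da) (Fin da) ℂ →ₗ[ℂ] Matrix (Fin db) (Fin db) ℂ) : Prop :=
  (choi Φ).PosSemidef ∧ Loewner (ptraceB (choi Φ)) 1

/-- Completely positive and trace preserving, via the Choi matrix. -/
def IsCPTP {da db : ℕ}
    (Φ : Matrix (Fin da) (Fin da) ℂ →ₗ[ℂ] Matrix (Fin db) (Fin db) ℂ) : Prop :=
  (choi Φ).PosSemidef ∧ ptraceB (choi Φ) = 1

/-- The map `id_A ⊗ Φ` acting on operators on `A ⊗ A`. -/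
noncomputable def idTensor {da db : ℕ}
    (Φ : Matrix (Fin da) (Fin da) ℂ →ₗ[ℂ] Matrix (Fin db) (Fin db) ℂ)
    (M : Matrix (Fin da × Fin da) (Fin da × Fin da) ℂ) :
    Matrix (Fin da × Fin db) (Fin da × Fin db) ℂ :=
  Matrix.of fun p q => Φ (Matrix.of fun k l => M (p.1, k) (q.1, l)) p.2 q.2

/-- Diamond norm: `max_ρ ‖(id ⊗ Φ)(ρ)‖₁` over bipartite density operators. -/
noncomputable def diamondNorm {da db : ℕ}
    (Φ : Matrix (Fin da) (Fin da) ℂ →ₗ[ℂ] Matrix (Fin db) (Fin db) ℂ) : ℝ :=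
  sSup {x : ℝ | ∃ ρ : Matrix (Fin da × Fin da) (Fin da × Fin da) ℂ,
    Density ρ ∧ x = traceNorm (idTensor Φ ρ)}

/-- Base norm with respect to CPTNI maps. -/
noncomputable def cptniNorm {da db : ℕ}
    (Φ : Matrix (Fin da) (Fin da) ℂ →ₗ[ℂ] Matrix (Fin db) (Fin db) ℂ) : ℝ :=
  sInf {s : ℝ | ∃ lp lm : ℝ, ∃ Λp Λm :
      Matrix (Fin da) (Fin da) ℂ →ₗ[ℂ] Matrix (Fin db) (Fin db) ℂ,
    0 ≤ lp ∧ 0 ≤ lm ∧ IsCPTNI Λp ∧ IsCPTNI Λm ∧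
    Φ = (lp : ℂ) • Λp - (lm : ℂ) • Λm ∧ s = lp + lm}

/-- The Pauli `Z` matrix. -/
def pauliZ : Matrix (Fin 2) (Fin 2) ℂ := !![1, 0; 0, -1]

/-- Conjugation by Pauli `Z`: `X ↦ Z X Z`. -/
noncomputable def zConj : Matrix (Fin 2) (Fin 2) ℂ →ₗ[ℂ] Matrix (Fin 2) (Fin 2) ℂ :=
  (LinearMap.mulLeft ℂ pauliZ).comp (LinearMap.mulRight ℂ pauliZ)

/-- The qubit dephasing channel `Δ_p(X) = (1-p) X + p Z X Z`. -/
noncomputable def dephasing (p : ℝ) :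
    Matrix (Fin 2) (Fin 2) ℂ →ₗ[ℂ] Matrix (Fin 2) (Fin 2) ℂ :=
  (((1 - p : ℝ) : ℂ) • LinearMap.id) + (((p : ℝ) : ℂ) • zConj)

/-! Any left inverse of `Δ_p` is the explicit map `Ψ = a • id - b • Z(·)Z` with
`a = (1-p)/(1-2p)`, `b = p/(1-2p)`; since `a - b = 1` and `Z(·)Z` preserves traces, so does `Ψ`.
On a bipartite state, `(id ⊗ Ψ)(ρ) = a ρ - b WρW` with `W = 1 ⊗ Z` is a difference of positive
matrices of traces `a` and `b`, so its trace norm is at most `a + b = 1/(1-2p)`. At the maximally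
entangled state `ρ` and `WρW` are orthogonal Bell projectors, and the bound is attained. -/

namespace Matrix.IsHermitian

variable {n 𝕜 : Type*} [Fintype n] [DecidableEq n] [RCLike 𝕜] {A B : Matrix n n 𝕜}

theorem map_eigenvalues_of_eq_cfc (hA : A.IsHermitian) (hB : B.IsHermitian) {f : ℝ → ℝ}
    (hBA : B = cfc f A) :
    Finset.univ.val.map hB.eigenvalues = Finset.univ.val.map (f ∘ hA.eigenvalues) := by
  have hroots : B.charpoly.roots = Finset.univ.val.map (RCLike.ofReal ∘ f ∘ hA.eigenvalues) := by
    rw [hBA, hA.charpoly_cfc_eq f, Polynomial.roots_prod]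
    · simp
    · simp [Finset.prod_ne_zero_iff, Polynomial.X_sub_C_ne_zero]
  rw [hB.roots_charpoly_eq_eigenvalues, ← Multiset.map_map, ← Multiset.map_map] at hroots
  exact Multiset.map_injective RCLike.ofReal_injective hroots

theorem sum_eigenvalues_of_eq_cfc (hA : A.IsHermitian) (hB : B.IsHermitian) {f : ℝ → ℝ}
    (hBA : B = cfc f A) (g : ℝ → ℝ) :
    ∑ i, g (hB.eigenvalues i) = ∑ i, g (f (hA.eigenvalues i)) := by
  have := congrArg (fun s => (s.map g).sum) (map_eigenvalues_of_eq_cfc hA hB hBA)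
  simpa [Multiset.map_map] using this

end Matrix.IsHermitian

section TraceNorm

variable {n : Type*} [Fintype n] [DecidableEq n]

theorem traceNorm_eq_sum_abs_eigenvalues {X : Matrix n n ℂ} (hX : X.IsHermitian) :
    traceNorm X = ∑ i, |hX.eigenvalues i| := by
  have hsq : X * Xᴴ = cfc (· ^ 2 : ℝ → ℝ) X := by
    rw [cfc_pow_id X 2 hX.isSelfAdjoint, hX.eq, sq]
  simp only [traceNorm, singVals]
  rw [hX.sum_eigenvalues_of_eq_cfc _ hsq Real.sqrt]
  simp [Real.sqrt_sq_eq_abs]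

theorem traceNorm_eq_re_trace {P : Matrix n n ℂ} (hP : P.PosSemidef) :
    traceNorm P = P.trace.re := by
  rw [traceNorm_eq_sum_abs_eigenvalues hP.1, hP.1.trace_eq_sum_eigenvalues]
  simp [abs_of_nonneg (hP.eigenvalues_nonneg _)]

theorem traceNorm_eq_of_mul_conjTranspose_eq {X Y : Matrix n n ℂ} (h : X * Xᴴ = Y * Yᴴ) :
    traceNorm X = traceNorm Y := by
  simp only [traceNorm, singVals]
  congr!

-- In an eigenbasis of `P - Q`, each eigenvalue is a difference of nonnegative diagonal entries.
theorem traceNorm_sub_le {P Q : Matrix n n ℂ} (hP : P.PosSemidef) (hQ : Q.PosSemidef) :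
    traceNorm (P - Q) ≤ P.trace.re + Q.trace.re := by
  have hPQ : (P - Q).IsHermitian := hP.1.sub hQ.1
  set U : Matrix n n ℂ := (hPQ.eigenvectorUnitary : Matrix n n ℂ)
  have hdiag := hPQ.conjStarAlgAut_star_eigenvectorUnitary
  rw [Unitary.conjStarAlgAut_apply, Unitary.coe_star, star_star] at hdiag
  have hUU : U * star U = 1 := Unitary.mul_star_self_of_mem hPQ.eigenvectorUnitary.2
  have htrace (M : Matrix n n ℂ) : (star U * M * U).trace = M.trace := by
    rw [trace_mul_cycle, hUU, one_mul]
  have hP' : (star U * P * U).PosSemidef := hP.conjTranspose_mul_mul_same U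
  have hQ' : (star U * Q * U).PosSemidef := hQ.conjTranspose_mul_mul_same U
  have heig (i : n) : (hPQ.eigenvalues i : ℂ) = (star U * P * U) i i - (star U * Q * U) i i := by
    have := congrFun (congrFun hdiag i) i
    simp only [mul_sub, sub_mul] at this
    simpa using this.symm
  rw [traceNorm_eq_sum_abs_eigenvalues hPQ, ← htrace P, ← htrace Q, trace, trace, Complex.re_sum,
    Complex.re_sum, ← Finset.sum_add_distrib]
  simp only [diag_apply]
  refine Finset.sum_le_sum fun i _ => abs_le.mpr ⟨?_, ?_⟩ <;>
  · have hp := Complex.nonneg_iff.mp (hP'.diag_nonneg (i := i))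
    have hq := Complex.nonneg_iff.mp (hQ'.diag_nonneg (i := i))
    have := congrArg Complex.re (heig i)
    simp only [Complex.ofReal_re, Complex.sub_re] at this
    linarith [hp.1, hq.1]

theorem traceNorm_sub_of_mul_eq_zero {P Q : Matrix n n ℂ} (hP : P.PosSemidef) (hQ : Q.PosSemidef)
    (hPQ : P * Q = 0) : traceNorm (P - Q) = P.trace.re + Q.trace.re := by
  have hQP : Q * P = 0 := by
    rw [← hP.1.eq, ← hQ.1.eq, ← conjTranspose_mul, hPQ, conjTranspose_zero]
  have hsq : (P - Q) * (P - Q)ᴴ = (P + Q) * (P + Q)ᴴ := by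
    rw [conjTranspose_sub, conjTranspose_add, hP.1.eq, hQ.1.eq]
    simp only [mul_sub, sub_mul, mul_add, add_mul, hPQ, hQP]
    abel
  rw [traceNorm_eq_of_mul_conjTranspose_eq hsq, traceNorm_eq_re_trace (hP.add hQ), trace_add,
    Complex.add_re]

theorem traceNorm_smul_sub_smul_conj_le {ρ : Matrix n n ℂ} (hρ : ρ.PosSemidef) {a b : ℝ}
    (ha : 0 ≤ a) (hb : 0 ≤ b) {W : Matrix n n ℂ} (hW : Wᴴ * W = 1) :
    traceNorm ((a : ℂ) • ρ - (b : ℂ) • (W * ρ * Wᴴ)) ≤ (a + b) * ρ.trace.re := by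
  have htr : (W * ρ * Wᴴ).trace = ρ.trace := by rw [trace_mul_cycle, hW, one_mul]
  calc _ ≤ ((a : ℂ) • ρ).trace.re + ((b : ℂ) • (W * ρ * Wᴴ)).trace.re :=
        traceNorm_sub_le (hρ.smul (Complex.zero_le_real.mpr ha))
          ((hρ.mul_mul_conjTranspose_same W).smul (Complex.zero_le_real.mpr hb))
    _ = (a + b) * ρ.trace.re := by
        rw [trace_smul, trace_smul, htr, smul_eq_mul, smul_eq_mul, Complex.re_ofReal_mul,
          Complex.re_ofReal_mul, add_mul]

end TraceNorm

section IdTensor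

variable {d : ℕ}

theorem idTensor_id (ρ : Matrix (Fin d × Fin d) (Fin d × Fin d) ℂ) :
    idTensor LinearMap.id ρ = ρ :=
  rfl

theorem idTensor_sub (Φ Φ' : Matrix (Fin d) (Fin d) ℂ →ₗ[ℂ] Matrix (Fin d) (Fin d) ℂ)
    (ρ : Matrix (Fin d × Fin d) (Fin d × Fin d) ℂ) :
    idTensor (Φ - Φ') ρ = idTensor Φ ρ - idTensor Φ' ρ :=
  rfl

theorem idTensor_smul (c : ℂ) (Φ : Matrix (Fin d) (Fin d) ℂ →ₗ[ℂ] Matrix (Fin d) (Fin d) ℂ)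
    (ρ : Matrix (Fin d × Fin d) (Fin d × Fin d) ℂ) :
    idTensor (c • Φ) ρ = c • idTensor Φ ρ :=
  rfl

theorem idTensor_mulLeft_comp_mulRight (A B : Matrix (Fin d) (Fin d) ℂ)
    (ρ : Matrix (Fin d × Fin d) (Fin d × Fin d) ℂ) :
    idTensor (LinearMap.mulLeft ℂ A ∘ₗ LinearMap.mulRight ℂ B) ρ = (1 ⊗ₖ A) * ρ * (1 ⊗ₖ B) := by
  ext ⟨i, k⟩ ⟨j, l⟩
  simp only [idTensor, LinearMap.coe_comp, Function.comp_apply, LinearMap.mulRight_apply,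
    LinearMap.mulLeft_apply, mul_apply, of_apply, Finset.mul_sum, kroneckerMap_apply, one_apply,
    ite_mul, one_mul, zero_mul, Fintype.sum_prod_type, Finset.sum_ite_irrel, Finset.sum_const_zero,
    Finset.sum_ite_eq, Finset.mem_univ, ↓reduceIte, mul_ite, Finset.sum_mul, mul_assoc, mul_zero,
    Finset.sum_ite_eq']
  exact Finset.sum_comm

theorem diamondNorm_eq_of_forall_le_of_exists_eq {da db : ℕ}
    {Φ : Matrix (Fin da) (Fin da) ℂ →ₗ[ℂ] Matrix (Fin db) (Fin db) ℂ} {c : ℝ}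
    (hle : ∀ ρ, Density ρ → traceNorm (idTensor Φ ρ) ≤ c)
    (heq : ∃ ρ, Density ρ ∧ traceNorm (idTensor Φ ρ) = c) :
    diamondNorm Φ = c := by
  obtain ⟨ρ, hρ, hc⟩ := heq
  refine IsGreatest.csSup_eq ⟨⟨ρ, hρ, hc.symm⟩, ?_⟩
  rintro _ ⟨σ, hσ, rfl⟩
  exact hle σ hσ

end IdTensor

section MaxEntangled

variable (d : ℕ)

def maxEntangledVec : Fin d × Fin d → ℂ := fun p => if p.1 = p.2 then 1 else 0

noncomputable def maxEntangled : Matrix (Fin d × Fin d) (Fin d × Fin d) ℂ :=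
  (d : ℂ)⁻¹ • vecMulVec (maxEntangledVec d) (maxEntangledVec d)

theorem star_maxEntangledVec : star (maxEntangledVec d) = maxEntangledVec d := by
  ext p
  by_cases h : p.1 = p.2 <;> simp [maxEntangledVec, h]

theorem density_maxEntangled [NeZero d] : Density (maxEntangled d) := by
  constructor
  · have := posSemidef_vecMulVec_self_star (maxEntangledVec d)
    rw [star_maxEntangledVec] at this
    exact this.smul (inv_nonneg.mpr (Nat.cast_nonneg' d))
  · rw [maxEntangled, trace_smul, trace_vecMulVec]
    simp only [dotProduct, maxEntangledVec, mul_ite, mul_one, mul_zero, Fintype.sum_prod_type,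
      Finset.sum_ite_eq, Finset.mem_univ, ↓reduceIte, Finset.sum_const, Finset.card_univ,
      Fintype.card_fin, nsmul_eq_mul, smul_eq_mul, inv_mul_cancel_of_invertible]

theorem vecMul_one_kronecker_dotProduct_maxEntangledVec (U : Matrix (Fin d) (Fin d) ℂ) :
    maxEntangledVec d ᵥ* (1 ⊗ₖ U) ⬝ᵥ maxEntangledVec d = U.trace := by
  simp only [dotProduct, vecMul, maxEntangledVec, kroneckerMap_apply, one_apply, ite_mul, one_mul,
    zero_mul, mul_ite, mul_zero, Fintype.sum_prod_type, Finset.sum_ite_irrel, Finset.sum_ite_eq,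
    Finset.mem_univ, ↓reduceIte, Finset.sum_const_zero, Finset.sum_ite_eq', mul_one, trace,
    diag_apply]

theorem maxEntangled_mul_one_kronecker_mul (U : Matrix (Fin d) (Fin d) ℂ) :
    maxEntangled d * (1 ⊗ₖ U) * maxEntangled d = (U.trace / d) • maxEntangled d := by
  rw [maxEntangled, Matrix.smul_mul, Matrix.smul_mul, Matrix.mul_smul, vecMulVec_mul,
    vecMulVec_mul_vecMulVec, vecMul_one_kronecker_dotProduct_maxEntangledVec,
    vecMulVec_smul, smul_smul, smul_smul, smul_smul, div_eq_mul_inv, mul_comm, mul_assoc]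

end MaxEntangled

theorem pauliZ_mul_self : pauliZ * pauliZ = 1 := by
  ext i j
  fin_cases i <;> fin_cases j <;> simp [pauliZ]

theorem conjTranspose_pauliZ : pauliZᴴ = pauliZ := by
  ext i j
  fin_cases i <;> fin_cases j <;> simp [pauliZ]

theorem trace_pauliZ : pauliZ.trace = 0 := by
  simp [pauliZ, trace]

theorem zConj_apply (X : Matrix (Fin 2) (Fin 2) ℂ) : zConj X = pauliZ * (X * pauliZ) :=
  rfl

theorem zConj_comp_zConj : zConj ∘ₗ zConj = LinearMap.id := by
  ext1 X
  simp only [LinearMap.comp_apply, zConj_apply, LinearMap.id_apply]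
  rw [← mul_assoc pauliZ, ← mul_assoc pauliZ, pauliZ_mul_self, one_mul, mul_assoc, pauliZ_mul_self,
    mul_one]

theorem trace_zConj (X : Matrix (Fin 2) (Fin 2) ℂ) : (zConj X).trace = X.trace := by
  rw [zConj_apply, trace_mul_comm, mul_assoc, pauliZ_mul_self, mul_one]

theorem idTensor_zConj (ρ : Matrix (Fin 2 × Fin 2) (Fin 2 × Fin 2) ℂ) :
    idTensor zConj ρ = (1 ⊗ₖ pauliZ) * ρ * (1 ⊗ₖ pauliZ)ᴴ := by
  rw [conjTranspose_kronecker, conjTranspose_one, conjTranspose_pauliZ]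
  exact idTensor_mulLeft_comp_mulRight pauliZ pauliZ ρ

theorem conjTranspose_one_kronecker_pauliZ_mul_self :
    (1 ⊗ₖ pauliZ)ᴴ * (1 ⊗ₖ pauliZ) = (1 : Matrix (Fin 2 × Fin 2) (Fin 2 × Fin 2) ℂ) := by
  rw [conjTranspose_kronecker, conjTranspose_one, conjTranspose_pauliZ, ← mul_kronecker_mul,
    mul_one, pauliZ_mul_self, one_kronecker_one]

theorem maxEntangled_mul_conj_one_kronecker_pauliZ :
    maxEntangled 2 * ((1 ⊗ₖ pauliZ) * maxEntangled 2 * (1 ⊗ₖ pauliZ)ᴴ) = 0 := by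
  rw [← mul_assoc, ← mul_assoc, maxEntangled_mul_one_kronecker_mul, trace_pauliZ, zero_div,
    zero_smul, zero_mul]

theorem traceNorm_smul_sub_smul_conj_maxEntangled {a b : ℝ} (ha : 0 ≤ a) (hb : 0 ≤ b) :
    traceNorm ((a : ℂ) • maxEntangled 2
      - (b : ℂ) • ((1 ⊗ₖ pauliZ) * maxEntangled 2 * (1 ⊗ₖ pauliZ)ᴴ)) = a + b := by
  have hΦ := density_maxEntangled 2
  have htr : ((1 ⊗ₖ pauliZ) * maxEntangled 2 * (1 ⊗ₖ pauliZ)ᴴ).trace = 1 := by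
    rw [trace_mul_cycle, conjTranspose_one_kronecker_pauliZ_mul_self, one_mul, hΦ.2]
  rw [traceNorm_sub_of_mul_eq_zero (hΦ.1.smul (Complex.zero_le_real.mpr ha))
      ((hΦ.1.mul_mul_conjTranspose_same _).smul (Complex.zero_le_real.mpr hb))
      (by rw [Matrix.smul_mul, Matrix.mul_smul, maxEntangled_mul_conj_one_kronecker_pauliZ,
        smul_zero, smul_zero]),
    trace_smul, trace_smul, hΦ.2, htr]
  simp

noncomputable def dephasingInv (p : ℝ) :
    Matrix (Fin 2) (Fin 2) ℂ →ₗ[ℂ] Matrix (Fin 2) (Fin 2) ℂ :=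
  (((1 - p) / (1 - 2 * p) : ℝ) : ℂ) • LinearMap.id - ((p / (1 - 2 * p) : ℝ) : ℂ) • zConj

section Dephasing

variable {p : ℝ}

theorem dephasing_comp_dephasingInv (hp : 1 - 2 * p ≠ 0) :
    dephasing p ∘ₗ dephasingInv p = LinearMap.id := by
  have hp' : (1 - 2 * p : ℂ) ≠ 0 := by exact_mod_cast hp
  simp only [dephasing, dephasingInv, LinearMap.comp_sub, LinearMap.comp_smul, LinearMap.add_comp,
    LinearMap.smul_comp, LinearMap.id_comp, LinearMap.comp_id, zConj_comp_zConj]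
  push_cast
  match_scalars
  · rw [div_mul_eq_mul_div, div_mul_eq_mul_div, div_sub_div_same, div_eq_one_iff_eq hp']
    ring
  · ring

theorem eq_dephasingInv_of_comp_dephasing (hp : 1 - 2 * p ≠ 0)
    {Ψ : Matrix (Fin 2) (Fin 2) ℂ →ₗ[ℂ] Matrix (Fin 2) (Fin 2) ℂ}
    (h : Ψ ∘ₗ dephasing p = LinearMap.id) : Ψ = dephasingInv p :=
  left_inv_eq_right_inv (M := Module.End ℂ _) h (dephasing_comp_dephasingInv hp)

theorem trace_dephasingInv (hp : 1 - 2 * p ≠ 0) (X : Matrix (Fin 2) (Fin 2) ℂ) :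
    (dephasingInv p X).trace = X.trace := by
  have hp' : (1 - 2 * p : ℂ) ≠ 0 := by exact_mod_cast hp
  simp only [dephasingInv, LinearMap.sub_apply, LinearMap.smul_apply, LinearMap.id_apply,
    trace_sub, trace_smul, trace_zConj, smul_eq_mul]
  push_cast
  rw [← sub_mul, ← sub_div, show 1 - (p : ℂ) - p = 1 - 2 * p by ring, div_self hp', one_mul]

theorem idTensor_dephasingInv (ρ : Matrix (Fin 2 × Fin 2) (Fin 2 × Fin 2) ℂ) :
    idTensor (dephasingInv p) ρ = (((1 - p) / (1 - 2 * p) : ℝ) : ℂ) • ρ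
      - ((p / (1 - 2 * p) : ℝ) : ℂ) • ((1 ⊗ₖ pauliZ) * ρ * (1 ⊗ₖ pauliZ)ᴴ) := by
  rw [dephasingInv, idTensor_sub, idTensor_smul, idTensor_smul, idTensor_id, idTensor_zConj]

theorem traceNorm_idTensor_dephasingInv_le (h0 : 0 ≤ p) (h1 : p < 1 / 2)
    {ρ : Matrix (Fin 2 × Fin 2) (Fin 2 × Fin 2) ℂ} (hρ : Density ρ) :
    traceNorm (idTensor (dephasingInv p) ρ) ≤ 1 / (1 - 2 * p) := by
  have hq : 0 < 1 - 2 * p := by linarith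
  rw [idTensor_dephasingInv]
  calc _ ≤ ((1 - p) / (1 - 2 * p) + p / (1 - 2 * p)) * ρ.trace.re :=
        traceNorm_smul_sub_smul_conj_le hρ.1 (div_nonneg (by linarith) hq.le)
          (div_nonneg h0 hq.le) conjTranspose_one_kronecker_pauliZ_mul_self
    _ = 1 / (1 - 2 * p) := by
        rw [hρ.2, Complex.one_re, mul_one, ← add_div, sub_add_cancel]

theorem traceNorm_idTensor_dephasingInv_maxEntangled (h0 : 0 ≤ p) (h1 : p < 1 / 2) :
    traceNorm (idTensor (dephasingInv p) (maxEntangled 2)) = 1 / (1 - 2 * p) := by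
  have hq : 0 < 1 - 2 * p := by linarith
  rw [idTensor_dephasingInv, traceNorm_smul_sub_smul_conj_maxEntangled
    (div_nonneg (by linarith) hq.le) (div_nonneg h0 hq.le), ← add_div, sub_add_cancel]

end Dephasing

theorem dephasing_inverse_diamondNorm_general (p : ℝ) (h0 : 0 ≤ p) (h1 : p < 1 / 2)
    (Ψ : Matrix (Fin 2) (Fin 2) ℂ →ₗ[ℂ] Matrix (Fin 2) (Fin 2) ℂ)
    (hl : Ψ ∘ₗ dephasing p = LinearMap.id) :
    (∀ X : Matrix (Fin 2) (Fin 2) ℂ, (Ψ X).trace = X.trace) ∧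
    diamondNorm Ψ = 1 / (1 - 2 * p) := by
  have hp : 1 - 2 * p ≠ 0 := by linarith
  obtain rfl := eq_dephasingInv_of_comp_dephasing hp hl
  exact ⟨trace_dephasingInv hp, diamondNorm_eq_of_forall_le_of_exists_eq
    (fun _ hρ => traceNorm_idTensor_dephasingInv_le h0 h1 hρ)
    ⟨maxEntangled 2, density_maxEntangled 2, traceNorm_idTensor_dephasingInv_maxEntangled h0 h1⟩⟩

/-- the inverse of the qubit dephasing channel (0 ≤ p < 1/2) is
trace preserving, with diamond norm `1/(1-2p)`. -/
theorem dephasing_inverse_diamondNorm (p : ℝ) (h0 : 0 ≤ p) (h1 : p < 1 / 2)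
    (Ψ : Matrix (Fin 2) (Fin 2) ℂ →ₗ[ℂ] Matrix (Fin 2) (Fin 2) ℂ)
    (hl : Ψ ∘ₗ dephasing p = LinearMap.id)
    (hr : dephasing p ∘ₗ Ψ = LinearMap.id) :
    (∀ X : Matrix (Fin 2) (Fin 2) ℂ, (Ψ X).trace = X.trace) ∧
    diamondNorm Ψ = 1 / (1 - 2 * p) :=
  dephasing_inverse_diamondNorm_general p h0 h1 Ψ hl
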